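/- Let k ≥ 2, q ≥ 1 and π ∈ 𝕊_{k−1}, and let d ∈ {r, s} with corresponding map δ ∈ {ρ, σ} on {1,…,k}. Then there exists a bijection f : W^π_{k,q} → W^{d(π)}_{k,q} such that (i) for all x, y ∈ W^π_{k,q}, x and y are adjacent in G^π_{k,q} if and only if f(x) and f(y) are adjacent in G^{d(π)}_{k,q}, and (ii) L^{d(π)}(f(x)) = δ(L^π(x)) for every x ∈ W^π_{k,q}, where δ(L) denotes the image of the set L under δ. -/

import Mathlib

open Finset

attribute [local instance] Classical.propDecidable

noncomputable section

/-- `π` is a permutation of `{1,…,k-1}` given in one-line notation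
(`π p` is the entry at position `p`), normalized to `0` outside `[1,k-1]`. -/
def OneLine (k : ℕ) (π : ℕ → ℕ) : Prop :=
  Set.BijOn π (Set.Icc 1 (k - 1)) (Set.Icc 1 (k - 1)) ∧
    ∀ p, p ∉ Set.Icc 1 (k - 1) → π p = 0

/-- The set `S(π)` of adjacent inversions of `π`:
those `i ∈ [1,k-2]` such that `i+1` appears before `i` in `π`. -/
def adjInvF (k : ℕ) (π : ℕ → ℕ) : Finset ℕ :=
  (Finset.Icc 1 (k - 2)).filter fun i =>
    ∃ p ∈ Finset.Icc 1 (k - 1), ∃ r ∈ Finset.Icc 1 (k - 1),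
      p < r ∧ π p = i + 1 ∧ π r = i

/-- `W^π_{k,q}`: weakly increasing `(k-1)`-tuples with entries in `[0,q-1]`
that are strictly increasing at every adjacent inversion of `π`
(vectors are functions `ℕ → ℕ` supported on `[1,k-1]`). -/
def W (k q : ℕ) (π : ℕ → ℕ) : Set (ℕ → ℕ) :=
  {v | (∀ i, i ∉ Finset.Icc 1 (k - 1) → v i = 0) ∧
       (∀ i ∈ Finset.Icc 1 (k - 1), v i ≤ q - 1) ∧
       (∀ i, 1 ≤ i → i + 1 ≤ k - 1 → v i ≤ v (i + 1)) ∧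
       (∀ i ∈ adjInvF k π, v i < v (i + 1))}

/-- `x + e_{π_a} + e_{π_{a+1}} + ⋯ + e_{π_{b-1}}`. -/
def shift (π : ℕ → ℕ) (a b : ℕ) (x : ℕ → ℕ) : ℕ → ℕ :=
  fun i => x i + if i ∈ (Finset.Icc a (b - 1)).image π then 1 else 0

/-- Adjacency in the graph `G^π_{k,q}`: one vertex is obtained from the other
by adding `e_{π_a} + ⋯ + e_{π_{b-1}}` for some `1 ≤ a < b ≤ k`. -/
def AdjRel (k : ℕ) (π : ℕ → ℕ) (x y : ℕ → ℕ) : Prop :=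
  ∃ a b, 1 ≤ a ∧ a < b ∧ b ≤ k ∧ (y = shift π a b x ∨ x = shift π a b y)

/-- The number of maximal blocks of consecutive integers of a finite set `T ⊆ ℕ`. -/
def numBlocks (T : Finset ℕ) : ℕ := (T.filter fun t => t + 1 ∉ T).card

/-- `cs_i(π)`: the number of pairs `1 ≤ a < b ≤ k` such that
`T_{a,b} = {π_a,…,π_{b-1}}` decomposes into exactly `i` maximal blocks
of consecutive integers. -/
def cs (k : ℕ) (π : ℕ → ℕ) (i : ℕ) : ℕ :=
  ((Finset.Icc 1 k ×ˢ Finset.Icc 1 k).filter fun p =>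
    p.1 < p.2 ∧ numBlocks ((Finset.Icc p.1 (p.2 - 1)).image π) = i).card

/-- For `i < j`, `{i,j}` is an edge of `G_π` iff `{i,i+1,…,j-1}` occurs as
a set of consecutive entries of `π`. -/
def GpiEdge (k : ℕ) (π : ℕ → ℕ) (i j : ℕ) : Prop :=
  ∃ a, 1 ≤ a ∧ a + (j - i) ≤ k ∧
    (Finset.Icc a (a + (j - i) - 1)).image π = Finset.Icc i (j - 1)

/-- Unordered adjacency in `G_π`. -/
def GpiAdjU (k : ℕ) (π : ℕ → ℕ) (i j : ℕ) : Prop :=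
  (i < j ∧ GpiEdge k π i j) ∨ (j < i ∧ GpiEdge k π j i)

/-- The position of the value `v` in the one-line notation of `π`. -/
def posOf (k : ℕ) (π : ℕ → ℕ) (v : ℕ) : ℕ :=
  if h : ((Finset.Icc 1 (k - 1)).filter fun t => π t = v).Nonempty then
    ((Finset.Icc 1 (k - 1)).filter fun t => π t = v).min' h
  else 0

/-- The rotation `r` on one-line permutations: if `π = π₁…π_{t-1}(k-1)π_{t+1}…π_{k-1}`,
then `r(π) = (π_{t+1}+1)…(π_{k-1}+1) 1 (π₁+1)…(π_{t-1}+1)`. -/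
def rot (k : ℕ) (π : ℕ → ℕ) : ℕ → ℕ := fun p =>
  if p ∉ Finset.Icc 1 (k - 1) then 0
  else if p < k - posOf k π (k - 1) then π (posOf k π (k - 1) + p) + 1
  else if p = k - posOf k π (k - 1) then 1
  else π (p - (k - posOf k π (k - 1))) + 1

/-- The reflection `s` on one-line permutations: if `π = π₁…π_{i-1} 1 π_{i+1}…π_{k-1}`,
then `s(π) = (k+1-π_{i-1})…(k+1-π₁) 1 (k+1-π_{k-1})…(k+1-π_{i+1})`. -/
def srefl (k : ℕ) (π : ℕ → ℕ) : ℕ → ℕ := fun p =>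
  if p ∉ Finset.Icc 1 (k - 1) then 0
  else if p < posOf k π 1 then k + 1 - π (posOf k π 1 - p)
  else if p = posOf k π 1 then 1
  else k + 1 - π (k + posOf k π 1 - p)

/-- The rotation `ρ` of the vertex set `{1,…,k}`. -/
def rotV (k i : ℕ) : ℕ := if i < k then i + 1 else 1

/-- The reflection `σ` of the vertex set `{1,…,k}`. -/
def sreflV (k i : ℕ) : ℕ := if i = 1 then 1 else k + 2 - i

/-- The maximal sorted family `(S₁,…,S_k)` associated with `σ`, `0`-indexed:
`sortedFam k σ (i-1) = S_i`. -/
def sortedFam (k : ℕ) (σ : ℕ → ℕ) : ℕ → Finset ℕ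
  | 0 => insert 1 ((adjInvF k σ).image (· + 1))
  | j + 1 => insert (σ (j + 1) + 1) ((sortedFam k σ j).erase (σ (j + 1)))

/-- `ear(π)`. -/
def ear (k : ℕ) (π : ℕ → ℕ) : ℕ :=
  ((Finset.Icc 1 (k - 2)).filter fun i => π (i + 1) = π i + 1 ∨ π i = π (i + 1) + 1).card
    + (({1, k - 1} : Finset ℕ) ∩ ({π 1, π (k - 1)} : Finset ℕ)).card

/-- `ε_i(π) = 1` if `i-1 ∈ S(π)` and `0` otherwise. -/
def eps (k : ℕ) (π : ℕ → ℕ) (i : ℕ) : ℕ := if i - 1 ∈ adjInvF k π then 1 else 0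

/-- Extension of a vector with the conventions `x_k = q-1` (`x₀ = 0` holds by
the normalization of vectors in `W^π_{k,q}`). -/
def xext (k q : ℕ) (x : ℕ → ℕ) (i : ℕ) : ℕ := if i = k then q - 1 else x i

/-- The label list `L^π(x) = {i ∈ [1,k] : x_{i-1} < x_i - ε_i(π)}`. -/
def labels (k q : ℕ) (π : ℕ → ℕ) (x : ℕ → ℕ) : Finset ℕ :=
  (Finset.Icc 1 k).filter fun i => xext k q x (i - 1) + eps k π i < xext k q x i

/-- A Sperner labeling of `G^π_{k,q}`. -/
def IsSperner (k q : ℕ) (π : ℕ → ℕ) (f : (ℕ → ℕ) → ℕ) : Prop :=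
  (∀ x ∈ W k q π, f x = 0 ∨ f x ∈ labels k q π x) ∧
  (∀ x ∈ W k q π, ∀ y ∈ W k q π, AdjRel k π x y → f x = f y ∨ f x = 0 ∨ f y = 0)

/-- The entry `w` appears between the entries `u` and `v` in `π`. -/
def Between (k : ℕ) (π : ℕ → ℕ) (u v w : ℕ) : Prop :=
  (posOf k π u < posOf k π w ∧ posOf k π w < posOf k π v) ∨
  (posOf k π v < posOf k π w ∧ posOf k π w < posOf k π u)

/-- A good set of colors for `π`. -/
def GoodSet (k : ℕ) (π : ℕ → ℕ) (C : Finset ℕ) : Prop :=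
  C ⊆ Finset.Icc 1 k ∧
  (∀ i ∈ C, ∀ j ∈ C, i ≠ j → ¬ GpiAdjU k π i j) ∧
  (∀ a ∈ C, ∀ b ∈ C, 1 < a → a < b → b < k →
      ((Between k π (a - 1) b a ∨ Between k π (a - 1) b (b - 1)) ∧
       (Between k π (b - 1) a (a - 1) ∨ Between k π (b - 1) a b))) ∧
  (1 ∈ C → ∀ b ∈ C, b ≠ 1 → Between k π 1 (b - 1) b) ∧
  (k ∈ C → ∀ b ∈ C, b ≠ k → Between k π b (k - 1) (b - 1))

/-- `x_a - x_{a-1} - ε_a(π)`, the `a`-th coordinate of the distance map `D`. -/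
def dval (k q : ℕ) (π : ℕ → ℕ) (x : ℕ → ℕ) (a : ℕ) : ℕ :=
  xext k q x a - xext k q x (a - 1) - eps k π a

/-- The distance coloring determined by a set of colors `C`:
`x` gets color `a ∈ C` if `dval x a` is the unique maximum of `dval x` on `C`,
and `0` otherwise. -/
def dcol (k q : ℕ) (π : ℕ → ℕ) (C : Finset ℕ) (x : ℕ → ℕ) : ℕ :=
  if h : ∃ a ∈ C, ∀ b ∈ C, b ≠ a → dval k q π x b < dval k q π x a then h.choose else 0

/-!
Prepend a letter `0` to `π` and read the word cyclically, positions and letters in `ZMod k`.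
Then `r(π)` rotates the positions and adds `1` to every letter, and `s(π)` reverses the
positions and replaces every letter `v` by `1 - v`.

A vertex `x ∈ W^π_{k,q}` is determined by its gaps `D_i = x_i - x_{i-1} - ε_i(π) ≥ 0`,
`i ∈ ZMod k`, which sum to `q - 1 - |S(π)|`, and `L^π(x) = {i | D_i > 0}`. Along an edge the gaps
change by `1_V(i) - 1_V(i - 1)` for the set `V` of letters of a cyclic window of the word (a
window of `π` or the complement of one). The bijection moves the gap at `i` to `δ(i)`: the
letter map of `d` carries the windows of `π` onto those of `d(π)`, and `|S(π)|` is preserved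
because `|S(π)| + 1` is the number of times the positions of `0, 1, …, k - 1` wind around the
cycle, `(1 / k) ∑_v ((pos v - pos (v - 1)) mod k)`, which rotating or reversing positions
does not change.
-/

lemma forall_sub_eq_iff {f g : ℕ → ℤ} {k : ℕ} (h0 : f 0 = g 0) :
    (∀ i ∈ Icc 1 k, f i - f (i - 1) = g i - g (i - 1)) ↔ ∀ j ≤ k, f j = g j := by
  refine ⟨fun h j hj => ?_, fun h i hi => ?_⟩
  · induction j with
    | zero => exact h0
    | succ j ih =>
      have := h (j + 1) (mem_Icc.mpr ⟨by omega, hj⟩)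
      simp only [Nat.add_sub_cancel] at this
      linarith [ih (by omega)]
  · have := mem_Icc.mp hi
    rw [h i this.2, h (i - 1) (by omega)]

section Gaps

variable {k q : ℕ} {ψ x y : ℕ → ℕ}

lemma adjInvF_subset : adjInvF k ψ ⊆ Icc 1 (k - 2) := by
  intro i hi
  simp only [adjInvF, mem_filter] at hi
  exact hi.1

lemma eps_eq_zero_of_notMem {i : ℕ} (h : i - 1 ∉ adjInvF k ψ) : eps k ψ i = 0 :=
  if_neg h

lemma eps_eq_one_of_mem {i : ℕ} (h : i - 1 ∈ adjInvF k ψ) : eps k ψ i = 1 :=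
  if_pos h

lemma eps_self : eps k ψ k = 0 :=
  eps_eq_zero_of_notMem fun h => by have := mem_Icc.mp (adjInvF_subset h); omega

lemma sum_eps : ∑ i ∈ Icc 1 k, eps k ψ i = (adjInvF k ψ).card := by
  have hS : range k ∩ adjInvF k ψ = adjInvF k ψ := inter_eq_right.mpr fun i hi => by
    have := mem_Icc.mp (adjInvF_subset hi); exact mem_range.mpr (by omega)
  calc ∑ i ∈ Icc 1 k, eps k ψ i
      = ∑ j ∈ range k, if j ∈ adjInvF k ψ then 1 else 0 :=
        sum_nbij' (· - 1) (· + 1)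
          (fun i hi => by have := mem_Icc.mp hi; exact mem_range.mpr (by omega))
          (fun i hi => by have := mem_range.mp hi; exact mem_Icc.mpr (by omega))
          (fun i hi => Nat.sub_add_cancel (mem_Icc.mp hi).1) (fun _ _ => rfl) (fun _ _ => rfl)
    _ = (adjInvF k ψ).card := by simp [sum_ite_mem, hS]

lemma xext_pred_add_eps_le (hk : 0 < k) (hx : x ∈ W k q ψ) {j : ℕ} (hj : j ∈ Icc 1 k) :
    xext k q x (j - 1) + eps k ψ j ≤ xext k q x j := by
  obtain ⟨hx0, hxq, hmono, hstrict⟩ := hx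
  obtain ⟨hj1, hjk⟩ := mem_Icc.mp hj
  have hxj : xext k q x (j - 1) = x (j - 1) := if_neg (by omega)
  rcases hjk.lt_or_eq with hjk | rfl
  · rw [hxj, xext, if_neg hjk.ne]
    by_cases hS : j - 1 ∈ adjInvF k ψ
    · have := hstrict _ hS
      rw [Nat.sub_add_cancel hj1] at this
      rw [eps_eq_one_of_mem hS]; omega
    · rw [eps_eq_zero_of_notMem hS, add_zero]
      rcases hj1.lt_or_eq with hj1 | rfl
      · simpa [Nat.sub_add_cancel hj1.le] using hmono (j - 1) (by omega) (by omega)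
      · simp [hx0 0 (by simp)]
  · rw [hxj, eps_self, xext, if_pos rfl, add_zero]
    by_cases h : j - 1 ∈ Icc 1 (j - 1)
    · exact hxq _ h
    · simp [hx0 _ h]

lemma natCast_dval (hk : 0 < k) (hx : x ∈ W k q ψ) {i : ℕ} (hi : i ∈ Icc 1 k) :
    (dval k q ψ x i : ℤ) = xext k q x i - xext k q x (i - 1) - eps k ψ i := by
  have := xext_pred_add_eps_le hk hx hi
  simp only [dval]
  omega

lemma xext_zero (hk : 0 < k) (hx : x ∈ W k q ψ) : xext k q x 0 = 0 := by
  rw [xext, if_neg hk.ne]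
  exact hx.1 0 (by simp)

lemma labels_eq_filter : labels k q ψ x = (Icc 1 k).filter (0 < dval k q ψ x ·) := by
  unfold labels dval
  exact filter_congr fun i _ => by omega

/-- The vector with gaps `G` relative to `ψ` (the inverse of `dval`). -/
def ofGaps (k : ℕ) (ψ G : ℕ → ℕ) (j : ℕ) : ℕ :=
  if j ∈ Icc 1 (k - 1) then ∑ i ∈ Icc 1 j, (G i + eps k ψ i) else 0

lemma xext_eq_sum (hk : 0 < k) (hx : x ∈ W k q ψ) {j : ℕ} (hj : j ≤ k) :
    xext k q x j = ∑ i ∈ Icc 1 j, (dval k q ψ x i + eps k ψ i) := by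
  induction j with
  | zero => simp [xext_zero hk hx]
  | succ j ih =>
    have := natCast_dval hk hx (i := j + 1) (mem_Icc.mpr ⟨by omega, hj⟩)
    have := xext_pred_add_eps_le hk hx (j := j + 1) (mem_Icc.mpr ⟨by omega, hj⟩)
    rw [sum_Icc_succ_top (by omega), ← ih (by omega)]
    simp only [Nat.add_sub_cancel] at *
    omega

lemma sum_dval_add_card (hk : 0 < k) (hx : x ∈ W k q ψ) :
    ∑ i ∈ Icc 1 k, dval k q ψ x i + (adjInvF k ψ).card = q - 1 := by
  rw [← sum_eps, ← sum_add_distrib, ← xext_eq_sum hk hx le_rfl, xext, if_pos rfl]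

variable {G : ℕ → ℕ}

lemma sum_gaps_iff : ∑ i ∈ Icc 1 k, G i + (adjInvF k ψ).card = q - 1 ↔
    ∑ i ∈ Icc 1 k, (G i + eps k ψ i) = q - 1 := by
  rw [sum_add_distrib, sum_eps]

lemma xext_ofGaps (hG : ∑ i ∈ Icc 1 k, G i + (adjInvF k ψ).card = q - 1) {j : ℕ} (hj : j ≤ k) :
    xext k q (ofGaps k ψ G) j = ∑ i ∈ Icc 1 j, (G i + eps k ψ i) := by
  rw [sum_gaps_iff] at hG
  unfold xext ofGaps
  split_ifs with h1 h2
  · subst h1; exact hG.symm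
  · rfl
  · have : j = 0 := by simp at h2; omega
    simp [this]

lemma dval_ofGaps (hG : ∑ i ∈ Icc 1 k, G i + (adjInvF k ψ).card = q - 1) {i : ℕ}
    (hi : i ∈ Icc 1 k) : dval k q ψ (ofGaps k ψ G) i = G i := by
  obtain ⟨hi1, hik⟩ := mem_Icc.mp hi
  have h := sum_Icc_succ_top (M := ℕ) (a := 1) (b := i - 1) (by omega) (fun i => G i + eps k ψ i)
  rw [Nat.sub_add_cancel hi1] at h
  rw [dval, xext_ofGaps hG hik, xext_ofGaps hG (by omega), h]
  omega

lemma ofGaps_mem_W (hG : ∑ i ∈ Icc 1 k, G i + (adjInvF k ψ).card = q - 1) :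
    ofGaps k ψ G ∈ W k q ψ := by
  have hx : ∀ j ≤ k, j ≠ 0 → j ≠ k → ofGaps k ψ G j = xext k q (ofGaps k ψ G) j := by
    intro j _ _ hjk; rw [xext, if_neg hjk]
  have hxs : ∀ {j}, j ≤ k → xext k q (ofGaps k ψ G) j = ∑ i ∈ Icc 1 j, (G i + eps k ψ i) :=
    xext_ofGaps hG
  have hmono : ∀ i j, i ≤ j → j ≤ k →
      xext k q (ofGaps k ψ G) i ≤ xext k q (ofGaps k ψ G) j := fun i j hij hj => by
    rw [hxs hj, hxs (hij.trans hj)]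
    exact sum_le_sum_of_subset (Icc_subset_Icc_right hij)
  refine ⟨fun i hi => if_neg hi, fun i hi => ?_, fun i hi1 hi2 => ?_, fun i hi => ?_⟩
  · obtain ⟨hi1, hi2⟩ := mem_Icc.mp hi
    rw [hx i (by omega) (by omega) (by omega)]
    simpa [xext] using hmono i k (by omega) le_rfl
  · rw [hx i (by omega) (by omega) (by omega), hx (i + 1) (by omega) (by omega) (by omega)]
    exact hmono _ _ (by omega) (by omega)
  · have := mem_Icc.mp (adjInvF_subset hi)
    rw [hx i (by omega) (by omega) (by omega), hx (i + 1) (by omega) (by omega) (by omega),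
      hxs (by omega), hxs (by omega), sum_Icc_succ_top (by omega),
      eps_eq_one_of_mem (by simpa using hi)]
    omega

lemma ofGaps_congr {G' : ℕ → ℕ} (h : ∀ i ∈ Icc 1 k, G i = G' i) : ofGaps k ψ G = ofGaps k ψ G' := by
  funext j
  unfold ofGaps
  split_ifs with hj
  · exact sum_congr rfl fun i hi => by
      rw [h i (mem_Icc.mpr ⟨(mem_Icc.mp hi).1, by simp at hi hj; omega⟩)]
  · rfl

lemma ofGaps_dval (hk : 0 < k) (hx : x ∈ W k q ψ) : ofGaps k ψ (dval k q ψ x) = x := by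
  funext j
  unfold ofGaps
  split_ifs with hj
  · have := mem_Icc.mp hj
    rw [← xext_eq_sum hk hx (by omega), xext, if_neg (by omega)]
  · exact (hx.1 j hj).symm

lemma eq_add_indicator_iff (hk : 0 < k) (hx : x ∈ W k q ψ) (hy : y ∈ W k q ψ) {T : Finset ℕ}
    (hT : T ⊆ Icc 1 (k - 1)) :
    y = (fun i => x i + if i ∈ T then 1 else 0) ↔
      ∀ i ∈ Icc 1 k, (dval k q ψ y i : ℤ) - dval k q ψ x i =
        (if i ∈ T then 1 else 0) - (if i - 1 ∈ T then 1 else 0) := by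
  have hT' : ∀ j, j ∉ Icc 1 (k - 1) → j ∉ T := fun j hj hjT => hj (hT hjT)
  have hdiff : ∀ i ∈ Icc 1 k, (dval k q ψ y i : ℤ) - dval k q ψ x i =
      ((xext k q y i : ℤ) - xext k q x i) - ((xext k q y (i - 1) : ℤ) - xext k q x (i - 1)) :=
    fun i hi => by rw [natCast_dval hk hx hi, natCast_dval hk hy hi]; ring
  rw [forall₂_congr fun i hi => by rw [hdiff i hi],
    forall_sub_eq_iff (by simp [xext_zero hk hx, xext_zero hk hy, hT' 0 (by simp)])]
  constructor
  · rintro rfl j hj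
    by_cases hjk : j = k
    · subst hjk
      simp [xext, hT' j fun h => by simp at h; omega]
    · simp only [xext, if_neg hjk]
      push_cast
      ring
  · intro h
    funext i
    by_cases hi : i ∈ Icc 1 (k - 1)
    · have := h i (by simp at hi; omega)
      have hik : i ≠ k := by simp at hi; omega
      simp only [xext, if_neg hik] at this
      split_ifs at this ⊢ <;> omega
    · simp [hx.1 i hi, hy.1 i hi, hT' i hi]

end Gaps

lemma ZMod.val_sub_eq_ite {k : ℕ} [NeZero k] (a b : ZMod k) :
    ((a - b).val : ℤ) = a.val - b.val + if a.val < b.val then (k : ℤ) else 0 := by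
  split_ifs with h
  · have hab : a - b + b = a := sub_add_cancel a b
    have hle : k ≤ (a - b).val + b.val := by
      by_contra hlt
      have := ZMod.val_add_of_lt (a := a - b) (b := b) (by omega)
      rw [hab] at this
      omega
    have := ZMod.val_add_val_of_le hle
    rw [hab] at this
    omega
  · rw [ZMod.val_sub (by omega)]
    omega

section Cyclic

variable {k : ℕ} {π ψ : ℕ → ℕ}

lemma OneLine.apply_mem (hπ : OneLine k π) {p : ℕ} (hp : p ∈ Icc 1 (k - 1)) :
    π p ∈ Icc 1 (k - 1) := by
  simpa using hπ.1.mapsTo (by simpa using hp)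

lemma OneLine.apply_lt (hπ : OneLine k π) (hk : 0 < k) (p : ℕ) : π p < k := by
  by_cases hp : p ∈ Icc 1 (k - 1)
  · have := mem_Icc.mp (hπ.apply_mem hp); omega
  · rw [hπ.2 p (by simpa using hp)]; exact hk

lemma OneLine.apply_eq_zero_iff (hπ : OneLine k π) {p : ℕ} (hp : p < k) : π p = 0 ↔ p = 0 := by
  by_cases h : p ∈ Icc 1 (k - 1)
  · have := mem_Icc.mp (hπ.apply_mem h); simp at h; omega
  · rw [hπ.2 p (by simpa using h)]; simp at h; omega

lemma OneLine.injOn_lt (hπ : OneLine k π) {p r : ℕ} (hp : p < k) (hr : r < k)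
    (h : π p = π r) : p = r := by
  rcases Nat.eq_zero_or_pos p with rfl | hp0
  · exact ((hπ.apply_eq_zero_iff hr).mp (h.symm.trans ((hπ.apply_eq_zero_iff hp).mpr rfl))).symm
  rcases Nat.eq_zero_or_pos r with rfl | hr0
  · exact (hπ.apply_eq_zero_iff hp).mp (h.trans ((hπ.apply_eq_zero_iff hr).mpr rfl))
  exact hπ.1.injOn (by simp; omega) (by simp; omega) h

lemma OneLine.posOf_mem (hπ : OneLine k π) {v : ℕ} (hv : v ∈ Icc 1 (k - 1)) :
    posOf k π v ∈ Icc 1 (k - 1) ∧ π (posOf k π v) = v := by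
  obtain ⟨p, hp, hpv⟩ := hπ.1.surjOn (by simpa using hv)
  have hne : ((Icc 1 (k - 1)).filter fun t => π t = v).Nonempty :=
    ⟨p, mem_filter.mpr ⟨by simpa using hp, hpv⟩⟩
  rw [posOf, dif_pos hne]
  exact mem_filter.mp (min'_mem _ hne)

lemma OneLine.posOf_zero (hπ : OneLine k π) : posOf k π 0 = 0 := by
  rw [posOf, dif_neg]
  rintro ⟨p, hp⟩
  have := mem_filter.mp hp
  exact absurd this.2 (by have := mem_Icc.mp (hπ.apply_mem this.1); omega)

/-- The word `0 π₁ ⋯ π_{k-1}` read cyclically: positions and letters live in `ZMod k`. -/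
def cyc (k : ℕ) (ψ : ℕ → ℕ) (p : ZMod k) : ZMod k := ψ p.val

/-- The inverse of `cyc`: the position of a letter in the cyclic word. -/
def cycPos (k : ℕ) (ψ : ℕ → ℕ) (v : ZMod k) : ZMod k := posOf k ψ v.val

def cycWindow (k : ℕ) (ψ : ℕ → ℕ) (s : ZMod k) (ℓ : ℕ) : Finset (ZMod k) :=
  (range ℓ).image fun j : ℕ => cyc k ψ (s + j)

variable [NeZero k]

lemma OneLine.cyc_injective (hπ : OneLine k π) : Function.Injective (cyc k π) := by
  intro p r h
  have hk := NeZero.pos k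
  have h' := congrArg ZMod.val h
  simp only [cyc, ZMod.val_cast_of_lt (hπ.apply_lt hk _)] at h'
  exact ZMod.val_injective k (hπ.injOn_lt (ZMod.val_lt p) (ZMod.val_lt r) h')

lemma OneLine.of_injective_cyc (hzero : ∀ p, p ∉ Set.Icc 1 (k - 1) → ψ p = 0)
    (hlt : ∀ p, ψ p < k) (hinj : Function.Injective (cyc k ψ)) : OneLine k ψ := by
  have hk := NeZero.pos k
  have hcyc : ∀ p < k, cyc k ψ p = ψ p := fun p hp => by rw [cyc, ZMod.val_cast_of_lt hp]
  have hψ : ∀ p < k, ∀ r < k, ψ p = ψ r → p = r := fun p hp r hr h => by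
    have := hinj ((hcyc p hp).trans ((congrArg _ h).trans (hcyc r hr).symm))
    simpa [ZMod.val_cast_of_lt hp, ZMod.val_cast_of_lt hr] using congrArg ZMod.val this
  have h0 : ψ 0 = 0 := hzero 0 (by simp)
  refine ⟨⟨fun p hp => ?_,
    fun p hp r hr h => hψ p (by simp at hp; omega) r (by simp at hr; omega) h, fun v hv => ?_⟩,
    hzero⟩
  · have hp' := Set.mem_Icc.mp hp
    have : ψ p ≠ 0 := fun h => by have := hψ p (by omega) 0 hk (h.trans h0.symm); omega
    exact Set.mem_Icc.mpr ⟨by omega, by have := hlt p; omega⟩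
  · have hv' := Set.mem_Icc.mp hv
    obtain ⟨g, hg⟩ := (Finite.injective_iff_surjective.mp hinj) v
    have hgv : ψ g.val = v := by
      have := congrArg ZMod.val hg
      rwa [cyc, ZMod.val_cast_of_lt (hlt _), ZMod.val_cast_of_lt (by omega)] at this
    refine ⟨g.val, Set.mem_Icc.mpr ⟨?_, by have := ZMod.val_lt g; omega⟩, hgv⟩
    by_contra h
    rw [show g.val = 0 by omega, h0] at hgv
    omega

lemma OneLine.cyc_cycPos (hπ : OneLine k π) (v : ZMod k) : cyc k π (cycPos k π v) = v := by
  have hk := NeZero.pos k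
  rcases Nat.eq_zero_or_pos v.val with hv | hv
  · rw [(ZMod.val_eq_zero v).mp hv, cycPos, ZMod.val_zero, hπ.posOf_zero, cyc]
    simp [hπ.2 0 (by simp)]
  · obtain ⟨hmem, hpos⟩ :=
      hπ.posOf_mem (v := v.val) (mem_Icc.mpr ⟨hv, by have := ZMod.val_lt v; omega⟩)
    rw [cycPos, cyc, ZMod.val_cast_of_lt (by have := mem_Icc.mp hmem; omega), hpos,
      ZMod.natCast_zmod_val]

lemma OneLine.cycPos_eq_iff (hπ : OneLine k π) {v p : ZMod k} :
    cycPos k π v = p ↔ cyc k π p = v :=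
  ⟨fun h => h ▸ hπ.cyc_cycPos v, fun h => hπ.cyc_injective (by rw [hπ.cyc_cycPos, h])⟩

lemma OneLine.mem_cycWindow (hπ : OneLine k π) {s v : ZMod k} {ℓ : ℕ} (hℓ : ℓ ≤ k) :
    v ∈ cycWindow k π s ℓ ↔ (cycPos k π v - s).val < ℓ := by
  rw [cycWindow, mem_image]
  constructor
  · rintro ⟨j, hj, hjv⟩
    rw [mem_range] at hj
    rw [(hπ.cycPos_eq_iff).mpr hjv, add_sub_cancel_left, ZMod.val_cast_of_lt (by omega)]
    exact hj
  · intro h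
    exact ⟨_, mem_range.mpr h, by rw [ZMod.natCast_zmod_val, add_sub_cancel, hπ.cyc_cycPos]⟩

lemma OneLine.compl_cycWindow (hπ : OneLine k π) (s : ZMod k) {ℓ : ℕ} (hℓ : ℓ < k) :
    (cycWindow k π s ℓ)ᶜ = cycWindow k π (s + ℓ) (k - ℓ) := by
  ext v
  rw [mem_compl, hπ.mem_cycWindow hℓ.le, hπ.mem_cycWindow (by omega), ← sub_sub]
  have h := ZMod.val_sub_eq_ite (cycPos k π v - s) ℓ
  rw [ZMod.val_cast_of_lt hℓ] at h
  have := ZMod.val_lt (cycPos k π v - s)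
  split_ifs at h <;> omega

end Cyclic

section Windows

variable {k q : ℕ} {π x y : ℕ → ℕ}

def bdry (V : Finset (ZMod k)) (g : ZMod k) : ℤ :=
  (if g ∈ V then 1 else 0) - (if g - 1 ∈ V then 1 else 0)

/-- The differences `dval y - dval x` along the edges `x → y` of `G^ψ_{k,q}`. -/
def edgeDirs (k : ℕ) (ψ : ℕ → ℕ) : Set (ZMod k → ℤ) :=
  {β | ∃ s ℓ, 0 < ℓ ∧ ℓ < k ∧ β = bdry (cycWindow k ψ s ℓ)}

lemma bdry_compl [NeZero k] (V : Finset (ZMod k)) : bdry Vᶜ = -bdry V := by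
  funext g
  simp only [bdry, mem_compl, Pi.neg_apply]
  split_ifs <;> simp

lemma bdry_image_add_one (V : Finset (ZMod k)) (g : ZMod k) :
    bdry (V.image (· + 1)) g = bdry V (g - 1) := by
  have hmem : ∀ a : ZMod k, a ∈ V.image (· + 1) ↔ a - 1 ∈ V := fun a =>
    ⟨fun h => by obtain ⟨b, hb, rfl⟩ := mem_image.mp h; simpa using hb,
      fun h => mem_image.mpr ⟨a - 1, h, sub_add_cancel a 1⟩⟩
  simp only [bdry, hmem]

lemma bdry_image_one_sub (V : Finset (ZMod k)) (g : ZMod k) :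
    bdry (V.image (1 - ·)) g = -bdry V (2 - g) := by
  have hmem : ∀ a : ZMod k, a ∈ V.image (1 - ·) ↔ 1 - a ∈ V := fun a =>
    ⟨fun h => by obtain ⟨b, hb, rfl⟩ := mem_image.mp h; simpa using hb,
      fun h => mem_image.mpr ⟨1 - a, h, sub_sub_cancel 1 a⟩⟩
  simp only [bdry, hmem, show (1 : ZMod k) - (g - 1) = 2 - g by ring,
    show (2 : ZMod k) - g - 1 = 1 - g by ring]
  ring

lemma natCast_mem_image_natCast_iff {T : Finset ℕ} (hT : T ⊆ Icc 1 (k - 1)) {n : ℕ} (hn : n ≤ k) :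
    (n : ZMod k) ∈ T.image (Nat.cast : ℕ → ZMod k) ↔ n ∈ T := by
  refine ⟨fun h => ?_, fun h => mem_image_of_mem _ h⟩
  obtain ⟨m, hm, hmn⟩ := mem_image.mp h
  have hm' := mem_Icc.mp (hT hm)
  rw [ZMod.natCast_eq_natCast_iff', Nat.mod_eq_of_lt (by omega : m < k)] at hmn
  rcases hn.lt_or_eq with hn | rfl
  · rwa [← Nat.mod_eq_of_lt hn, ← hmn]
  · simp at hmn; omega

lemma bdry_image_natCast {T : Finset ℕ} (hT : T ⊆ Icc 1 (k - 1)) {i : ℕ} (hi : i ∈ Icc 1 k) :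
    bdry (T.image (Nat.cast : ℕ → ZMod k)) i =
      (if i ∈ T then 1 else 0) - (if i - 1 ∈ T then 1 else 0) := by
  have hi' := mem_Icc.mp hi
  have hsub : (i : ZMod k) - 1 = ((i - 1 : ℕ) : ZMod k) := by rw [Nat.cast_sub hi'.1, Nat.cast_one]
  simp only [bdry, hsub, natCast_mem_image_natCast_iff hT hi'.2,
    natCast_mem_image_natCast_iff hT (by omega : i - 1 ≤ k)]

lemma image_window_eq_cycWindow (ψ : ℕ → ℕ) {a b : ℕ} (hab : a < b) (hb : b ≤ k) :
    ((Icc a (b - 1)).image ψ).image (Nat.cast : ℕ → ZMod k) = cycWindow k ψ a (b - a) := by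
  ext v
  simp only [image_image, cycWindow, mem_image, mem_Icc, mem_range, Function.comp]
  constructor
  · rintro ⟨p, hp, rfl⟩
    refine ⟨p - a, by omega, ?_⟩
    rw [← Nat.cast_add, Nat.add_sub_cancel' hp.1, cyc, ZMod.val_cast_of_lt (by omega)]
  · rintro ⟨j, hj, rfl⟩
    refine ⟨a + j, by omega, ?_⟩
    rw [← Nat.cast_add, cyc, ZMod.val_cast_of_lt (by omega)]

variable [NeZero k]

lemma OneLine.neg_mem_edgeDirs (hπ : OneLine k π) {β : ZMod k → ℤ} (hβ : β ∈ edgeDirs k π) :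
    -β ∈ edgeDirs k π := by
  obtain ⟨s, ℓ, hℓ0, hℓ, rfl⟩ := hβ
  exact ⟨s + ℓ, k - ℓ, by omega, by omega, by rw [← hπ.compl_cycWindow s hℓ, bdry_compl]⟩

lemma OneLine.shift_eq_iff (hπ : OneLine k π) (hx : x ∈ W k q π) (hy : y ∈ W k q π) {a b : ℕ}
    (ha : 1 ≤ a) (hab : a < b) (hb : b ≤ k) :
    y = shift π a b x ↔ ∀ i ∈ Icc 1 k,
      (dval k q π y i : ℤ) - dval k q π x i = bdry (cycWindow k π a (b - a)) i := by
  have hT : (Icc a (b - 1)).image π ⊆ Icc 1 (k - 1) := fun v hv => by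
    obtain ⟨p, hp, rfl⟩ := mem_image.mp hv
    exact hπ.apply_mem (by simp at hp ⊢; omega)
  unfold shift
  rw [eq_add_indicator_iff (NeZero.pos k) hx hy hT, ← image_window_eq_cycWindow π hab hb]
  exact forall₂_congr fun i hi => by rw [bdry_image_natCast hT hi]

lemma OneLine.exists_window (hπ : OneLine k π) (s : ZMod k) {ℓ : ℕ} (hℓ0 : 0 < ℓ) (hℓ : ℓ < k) :
    ∃ a b, 1 ≤ a ∧ a < b ∧ b ≤ k ∧ (cycWindow k π s ℓ = cycWindow k π a (b - a) ∨
      (cycWindow k π s ℓ)ᶜ = cycWindow k π a (b - a)) := by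
  have hs := ZMod.val_lt s
  by_cases hlin : 1 ≤ s.val ∧ s.val + ℓ ≤ k
  · exact ⟨s.val, s.val + ℓ, hlin.1, by omega, hlin.2,
      Or.inl (by rw [ZMod.natCast_zmod_val, Nat.add_sub_cancel_left])⟩
  · have hval : 1 ≤ (s + ℓ).val ∧ (s + ℓ).val ≤ ℓ := by
      rw [ZMod.val_add, ZMod.val_cast_of_lt hℓ]
      rcases Nat.lt_or_ge (s.val + ℓ) k with h | h
      · rw [Nat.mod_eq_of_lt h]; omega
      · rw [Nat.mod_eq_sub_mod h, Nat.mod_eq_of_lt (by omega)]; omega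
    refine ⟨(s + ℓ).val, (s + ℓ).val + (k - ℓ), hval.1, by omega, by omega, Or.inr ?_⟩
    rw [hπ.compl_cycWindow s hℓ, ZMod.natCast_zmod_val, Nat.add_sub_cancel_left]

lemma OneLine.adjRel_iff (hπ : OneLine k π) (hx : x ∈ W k q π) (hy : y ∈ W k q π) :
    AdjRel k π x y ↔ ∃ β ∈ edgeDirs k π, ∀ i ∈ Icc 1 k,
      (dval k q π y i : ℤ) - dval k q π x i = β i := by
  constructor
  · rintro ⟨a, b, ha, hab, hb, hxy | hyx⟩
    · exact ⟨_, ⟨a, b - a, by omega, by omega, rfl⟩, (hπ.shift_eq_iff hx hy ha hab hb).mp hxy⟩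
    · refine ⟨_, hπ.neg_mem_edgeDirs ⟨a, b - a, by omega, by omega, rfl⟩, fun i hi => ?_⟩
      rw [Pi.neg_apply, ← (hπ.shift_eq_iff hy hx ha hab hb).mp hyx i hi]
      ring
  · rintro ⟨β, ⟨s, ℓ, hℓ0, hℓ, rfl⟩, h⟩
    obtain ⟨a, b, ha, hab, hb, hV | hV⟩ := hπ.exists_window s hℓ0 hℓ
    · exact ⟨a, b, ha, hab, hb, Or.inl ((hπ.shift_eq_iff hx hy ha hab hb).mpr (hV ▸ h))⟩
    · refine ⟨a, b, ha, hab, hb, Or.inr ((hπ.shift_eq_iff hy hx ha hab hb).mpr fun i hi => ?_)⟩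
      rw [← hV, bdry_compl, Pi.neg_apply, ← h i hi]
      ring

end Windows

section Descents

variable {k : ℕ} {π ψ : ℕ → ℕ}

def cycDescents [NeZero k] (P : ZMod k → ZMod k) : ℕ :=
  (univ.filter fun v => (P v).val < (P (v - 1)).val).card

/-- Walking once around the cycle, the forward steps `P v - P (v - 1)` add up to
`k` times the number of times the walk passes from `k - 1` back to `0`. -/
lemma cycDescents_mul [NeZero k] (P : ZMod k → ZMod k) :
    cycDescents P * k = ∑ v, (P v - P (v - 1)).val := by
  have hshift : ∑ v, ((P (v - 1)).val : ℤ) = ∑ v, ((P v).val : ℤ) :=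
    Equiv.sum_comp (Equiv.subRight 1) (fun v => ((P v).val : ℤ))
  have : (∑ v, (P v - P (v - 1)).val : ℤ) = cycDescents P * k := by
    simp only [ZMod.val_sub_eq_ite, sum_add_distrib, sum_sub_distrib, hshift, sub_self, zero_add,
      sum_ite, sum_const_zero, add_zero, sum_const, nsmul_eq_mul, cycDescents]
  exact_mod_cast this.symm

lemma OneLine.posOf_apply (hπ : OneLine k π) {p : ℕ} (hp : p ∈ Icc 1 (k - 1)) :
    posOf k π (π p) = p := by
  obtain ⟨hmem, hpos⟩ := hπ.posOf_mem (hπ.apply_mem hp)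
  exact hπ.1.injOn (by simpa using hmem) (by simpa using hp) hpos

lemma OneLine.mem_adjInvF_iff (hπ : OneLine k π) {i : ℕ} :
    i ∈ adjInvF k π ↔ i ∈ Icc 1 (k - 2) ∧ posOf k π (i + 1) < posOf k π i := by
  simp only [adjInvF, mem_filter]
  refine and_congr_right fun hi => ⟨?_, fun h => ?_⟩
  · rintro ⟨p, hp, r, hr, hpr, hpi, hri⟩
    rwa [← hpi, ← hri, hπ.posOf_apply hp, hπ.posOf_apply hr]
  · have hi := mem_Icc.mp hi
    obtain ⟨hp, hpv⟩ := hπ.posOf_mem (v := i + 1) (mem_Icc.mpr ⟨by omega, by omega⟩)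
    obtain ⟨hr, hrv⟩ := hπ.posOf_mem (v := i) (mem_Icc.mpr ⟨by omega, by omega⟩)
    exact ⟨_, hp, _, hr, h, hpv, hrv⟩

lemma OneLine.val_cycPos (hπ : OneLine k π) [NeZero k] (v : ZMod k) :
    (cycPos k π v).val = posOf k π v.val := by
  have hv := ZMod.val_lt v
  apply ZMod.val_cast_of_lt
  rcases Nat.eq_zero_or_pos v.val with h | h
  · rw [h, hπ.posOf_zero]; omega
  · have := mem_Icc.mp (hπ.posOf_mem (v := v.val) (mem_Icc.mpr ⟨h, by omega⟩)).1; omega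

lemma val_natCast_succ_of_mem_adjInvF [NeZero k] {i : ℕ} (hi : i ∈ adjInvF k π) :
    ((i + 1 : ℕ) : ZMod k).val = i + 1 :=
  ZMod.val_cast_of_lt (by have := mem_Icc.mp (adjInvF_subset hi); omega)

lemma OneLine.filter_descent_cycPos_eq [Fact (1 < k)] (hπ : OneLine k π) :
    univ.filter (fun v => (cycPos k π v).val < (cycPos k π (v - 1)).val) =
      insert 0 ((adjInvF k π).image fun i => ((i + 1 : ℕ) : ZMod k)) := by
  have hk : 1 < k := Fact.out
  ext v
  simp only [mem_filter, mem_univ, true_and, mem_insert, mem_image, hπ.val_cycPos]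
  have hv := ZMod.val_lt v
  have hsub := ZMod.val_sub_eq_ite v 1
  rw [ZMod.val_one] at hsub
  rcases Nat.eq_zero_or_pos v.val with h0 | hpos
  · have hkm1 : (v - 1).val = k - 1 := by rw [if_pos (by omega)] at hsub; omega
    have := mem_Icc.mp (hπ.posOf_mem (v := k - 1) (mem_Icc.mpr ⟨by omega, le_rfl⟩)).1
    rw [hkm1, h0, hπ.posOf_zero]
    simp only [(ZMod.val_eq_zero v).mp h0, true_or, iff_true]
    omega
  · have hm1 : (v - 1).val = v.val - 1 := by rw [if_neg (by omega)] at hsub; omega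
    have hv0 : v ≠ 0 := fun h => by simp [h] at hpos
    rw [hm1]
    simp only [hv0, false_or]
    constructor
    · intro h
      have h1 : v.val ≠ 1 := fun h1 => by rw [h1, Nat.sub_self, hπ.posOf_zero] at h; omega
      refine ⟨v.val - 1, hπ.mem_adjInvF_iff.mpr
        ⟨mem_Icc.mpr ⟨by omega, by omega⟩, by rwa [Nat.sub_add_cancel hpos]⟩, ?_⟩
      rw [Nat.sub_add_cancel hpos, ZMod.natCast_zmod_val]
    · rintro ⟨i, hi, rfl⟩
      rw [val_natCast_succ_of_mem_adjInvF hi, Nat.add_sub_cancel]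
      exact (hπ.mem_adjInvF_iff.mp hi).2

lemma OneLine.card_adjInvF_add_one [Fact (1 < k)] (hπ : OneLine k π) :
    (adjInvF k π).card + 1 = cycDescents (cycPos k π) := by
  rw [cycDescents, hπ.filter_descent_cycPos_eq, card_insert_of_notMem, card_image_of_injOn]
  · intro i hi j hj hij
    have := congrArg ZMod.val hij
    rwa [val_natCast_succ_of_mem_adjInvF hi, val_natCast_succ_of_mem_adjInvF hj,
      Nat.add_right_cancel_iff] at this
  · intro h
    obtain ⟨i, hi, hi0⟩ := mem_image.mp h
    have := congrArg ZMod.val hi0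
    rw [val_natCast_succ_of_mem_adjInvF hi, ZMod.val_zero] at this
    omega

lemma OneLine.card_adjInvF_eq [Fact (1 < k)] (hψ : OneLine k ψ) (hπ : OneLine k π)
    (h : ∑ v, (cycPos k ψ v - cycPos k ψ (v - 1)).val =
      ∑ v, (cycPos k π v - cycPos k π (v - 1)).val) :
    (adjInvF k ψ).card = (adjInvF k π).card := by
  have hmul : ((adjInvF k ψ).card + 1) * k = ((adjInvF k π).card + 1) * k := by
    rw [hψ.card_adjInvF_add_one, hπ.card_adjInvF_add_one, cycDescents_mul, cycDescents_mul, h]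
  exact Nat.add_right_cancel (Nat.eq_of_mul_eq_mul_right (NeZero.pos k) hmul)

end Descents

section Transport

variable {k q : ℕ} {ψ ψ' δ δ' x y : ℕ → ℕ}

def transport (k q : ℕ) (ψ ψ' δ' : ℕ → ℕ) (x : ℕ → ℕ) : ℕ → ℕ :=
  ofGaps k ψ' fun i => dval k q ψ x (δ' i)

lemma sum_comp_of_invOn (hδ : Set.MapsTo δ (Icc 1 k) (Icc 1 k))
    (hδ' : Set.MapsTo δ' (Icc 1 k) (Icc 1 k)) (hinv : Set.InvOn δ' δ (Icc 1 k) (Icc 1 k))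
    (G : ℕ → ℕ) : ∑ i ∈ Icc 1 k, G (δ' i) = ∑ i ∈ Icc 1 k, G i :=
  sum_nbij' δ' δ (fun _ hi => hδ' hi) (fun _ hi => hδ hi) (fun _ hi => hinv.2 hi)
    (fun _ hi => hinv.1 hi) (fun _ _ => rfl)

lemma sum_dval_comp_add_card (hk : 0 < k) (hcard : (adjInvF k ψ').card = (adjInvF k ψ).card)
    (hδ : Set.MapsTo δ (Icc 1 k) (Icc 1 k)) (hδ' : Set.MapsTo δ' (Icc 1 k) (Icc 1 k))
    (hinv : Set.InvOn δ' δ (Icc 1 k) (Icc 1 k)) (hx : x ∈ W k q ψ) :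
    ∑ i ∈ Icc 1 k, dval k q ψ x (δ' i) + (adjInvF k ψ').card = q - 1 := by
  rw [sum_comp_of_invOn hδ hδ' hinv, hcard, sum_dval_add_card hk hx]

lemma transport_mem (hk : 0 < k) (hcard : (adjInvF k ψ').card = (adjInvF k ψ).card)
    (hδ : Set.MapsTo δ (Icc 1 k) (Icc 1 k)) (hδ' : Set.MapsTo δ' (Icc 1 k) (Icc 1 k))
    (hinv : Set.InvOn δ' δ (Icc 1 k) (Icc 1 k)) (hx : x ∈ W k q ψ) :
    transport k q ψ ψ' δ' x ∈ W k q ψ' :=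
  ofGaps_mem_W (sum_dval_comp_add_card hk hcard hδ hδ' hinv hx)

lemma dval_transport (hk : 0 < k) (hcard : (adjInvF k ψ').card = (adjInvF k ψ).card)
    (hδ : Set.MapsTo δ (Icc 1 k) (Icc 1 k)) (hδ' : Set.MapsTo δ' (Icc 1 k) (Icc 1 k))
    (hinv : Set.InvOn δ' δ (Icc 1 k) (Icc 1 k)) (hx : x ∈ W k q ψ) {i : ℕ} (hi : i ∈ Icc 1 k) :
    dval k q ψ' (transport k q ψ ψ' δ' x) i = dval k q ψ x (δ' i) :=
  dval_ofGaps (sum_dval_comp_add_card hk hcard hδ hδ' hinv hx) hi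

lemma transport_transport (hk : 0 < k) (hcard : (adjInvF k ψ').card = (adjInvF k ψ).card)
    (hδ : Set.MapsTo δ (Icc 1 k) (Icc 1 k)) (hδ' : Set.MapsTo δ' (Icc 1 k) (Icc 1 k))
    (hinv : Set.InvOn δ' δ (Icc 1 k) (Icc 1 k)) (hx : x ∈ W k q ψ) :
    transport k q ψ' ψ δ (transport k q ψ ψ' δ' x) = x := by
  conv_rhs => rw [← ofGaps_dval hk hx]
  exact ofGaps_congr fun i hi => by
    rw [dval_transport hk hcard hδ hδ' hinv hx (hδ hi), hinv.1 hi]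

lemma labels_transport (hk : 0 < k) (hcard : (adjInvF k ψ').card = (adjInvF k ψ).card)
    (hδ : Set.MapsTo δ (Icc 1 k) (Icc 1 k)) (hδ' : Set.MapsTo δ' (Icc 1 k) (Icc 1 k))
    (hinv : Set.InvOn δ' δ (Icc 1 k) (Icc 1 k)) (hx : x ∈ W k q ψ) :
    labels k q ψ' (transport k q ψ ψ' δ' x) = (labels k q ψ x).image δ := by
  ext j
  simp only [labels_eq_filter, mem_filter, mem_image]
  constructor
  · rintro ⟨hj, hpos⟩
    rw [dval_transport hk hcard hδ hδ' hinv hx hj] at hpos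
    exact ⟨δ' j, ⟨hδ' hj, hpos⟩, hinv.2 hj⟩
  · rintro ⟨i, ⟨hi, hpos⟩, rfl⟩
    rw [dval_transport hk hcard hδ hδ' hinv hx (hδ hi), hinv.1 hi]
    exact ⟨hδ hi, hpos⟩

lemma adjRel_transport_iff [NeZero k] (hψ : OneLine k ψ) (hψ' : OneLine k ψ')
    (hcard : (adjInvF k ψ').card = (adjInvF k ψ).card)
    (hδ : Set.MapsTo δ (Icc 1 k) (Icc 1 k)) (hδ' : Set.MapsTo δ' (Icc 1 k) (Icc 1 k))
    (hinv : Set.InvOn δ' δ (Icc 1 k) (Icc 1 k))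
    (α : ZMod k ≃ ZMod k) (hα : ∀ i ∈ Icc 1 k, ((δ i : ℕ) : ZMod k) = α i)
    (hdirs : ∀ β, β ∈ edgeDirs k ψ' ↔ β ∘ α ∈ edgeDirs k ψ)
    (hx : x ∈ W k q ψ) (hy : y ∈ W k q ψ) :
    AdjRel k ψ x y ↔ AdjRel k ψ' (transport k q ψ ψ' δ' x) (transport k q ψ ψ' δ' y) := by
  have hk := NeZero.pos k
  have hd := fun {z} (hz : z ∈ W k q ψ) {i} (hi : i ∈ Icc 1 k) =>
    dval_transport (ψ' := ψ') hk hcard hδ hδ' hinv hz hi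
  rw [hψ.adjRel_iff hx hy, hψ'.adjRel_iff (transport_mem hk hcard hδ hδ' hinv hx)
    (transport_mem hk hcard hδ hδ' hinv hy)]
  constructor
  · rintro ⟨β, hβ, h⟩
    refine ⟨β ∘ α.symm, (hdirs _).mpr (by simpa [Function.comp_def] using hβ), fun i hi => ?_⟩
    have hαi : α.symm i = ((δ' i : ℕ) : ZMod k) := by
      rw [Equiv.symm_apply_eq, ← hα _ (hδ' hi), hinv.2 hi]
    rw [hd hx hi, hd hy hi, h _ (hδ' hi), Function.comp_apply, hαi]
  · rintro ⟨β', hβ', h⟩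
    refine ⟨β' ∘ α, (hdirs β').mp hβ', fun i hi => ?_⟩
    have := h (δ i) (hδ hi)
    rwa [hd hx (hδ hi), hd hy (hδ hi), hinv.1 hi, hα i hi] at this

theorem exists_bijOn_of_edgeDirs [NeZero k] (hψ : OneLine k ψ) (hψ' : OneLine k ψ')
    (hcard : (adjInvF k ψ').card = (adjInvF k ψ).card)
    (hδ : Set.MapsTo δ (Icc 1 k) (Icc 1 k)) (hδ' : Set.MapsTo δ' (Icc 1 k) (Icc 1 k))
    (hinv : Set.InvOn δ' δ (Icc 1 k) (Icc 1 k))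
    (α : ZMod k ≃ ZMod k) (hα : ∀ i ∈ Icc 1 k, ((δ i : ℕ) : ZMod k) = α i)
    (hdirs : ∀ β, β ∈ edgeDirs k ψ' ↔ β ∘ α ∈ edgeDirs k ψ) :
    ∃ f : (ℕ → ℕ) → (ℕ → ℕ), Set.BijOn f (W k q ψ) (W k q ψ') ∧
      (∀ x ∈ W k q ψ, ∀ y ∈ W k q ψ, (AdjRel k ψ x y ↔ AdjRel k ψ' (f x) (f y))) ∧
      (∀ x ∈ W k q ψ, labels k q ψ' (f x) = (labels k q ψ x).image δ) := by
  have hk := NeZero.pos k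
  refine ⟨transport k q ψ ψ' δ', ?_, fun x hx y hy => ?_, fun x hx => ?_⟩
  · refine Set.InvOn.bijOn (f' := transport k q ψ' ψ δ) ⟨fun x hx => ?_, fun x hx => ?_⟩
      (fun x hx => transport_mem hk hcard hδ hδ' hinv hx)
      (fun x hx => transport_mem hk hcard.symm hδ' hδ hinv.symm hx)
    · exact transport_transport hk hcard hδ hδ' hinv hx
    · exact transport_transport hk hcard.symm hδ' hδ hinv.symm hx
  · exact adjRel_transport_iff hψ hψ' hcard hδ hδ' hinv α hα hdirs hx hy
  · exact labels_transport hk hcard hδ hδ' hinv hx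

end Transport

section Rotation

variable {k q : ℕ} {π : ℕ → ℕ}

lemma mapsTo_rotV : Set.MapsTo (rotV k) (Icc 1 k) (Icc 1 k) := fun i hi => by
  simp only [coe_Icc, Set.mem_Icc, rotV] at hi ⊢
  split_ifs <;> omega

lemma mapsTo_rotV_inv : Set.MapsTo (fun i => if i = 1 then k else i - 1) (Icc 1 k) (Icc 1 k) :=
  fun i hi => by
    simp only [coe_Icc, Set.mem_Icc] at hi ⊢
    split_ifs <;> omega

lemma invOn_rotV :
    Set.InvOn (fun i => if i = 1 then k else i - 1) (rotV k) (Icc 1 k) (Icc 1 k) := by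
  constructor <;> intro i hi <;> simp only [coe_Icc, Set.mem_Icc, rotV] at hi ⊢ <;>
    split_ifs <;> omega

lemma natCast_rotV {i : ℕ} (hi : i ∈ Icc 1 k) : ((rotV k i : ℕ) : ZMod k) = i + 1 := by
  rw [rotV]
  split_ifs with h
  · exact Nat.cast_succ i
  · rw [show i = k by simp at hi; omega, ZMod.natCast_self, zero_add, Nat.cast_one]

variable [Fact (1 < k)]

lemma OneLine.posOf_sub_one (hπ : OneLine k π) :
    posOf k π (k - 1) ∈ Icc 1 (k - 1) ∧ π (posOf k π (k - 1)) = k - 1 :=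
  hπ.posOf_mem (mem_Icc.mpr ⟨by have : 1 < k := Fact.out; omega, le_rfl⟩)

lemma OneLine.cyc_rot (hπ : OneLine k π) (p : ZMod k) :
    cyc k (rot k π) p = cyc k π (p + posOf k π (k - 1)) + 1 := by
  have hk : 1 < k := Fact.out
  obtain ⟨ht, hπt⟩ := hπ.posOf_sub_one
  have ht' := mem_Icc.mp ht
  have hn := ZMod.val_lt p
  have hval : (p + (posOf k π (k - 1) : ZMod k)).val = (p.val + posOf k π (k - 1)) % k := by
    rw [ZMod.val_add, ZMod.val_cast_of_lt (by omega)]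
  simp only [cyc, hval]
  unfold rot
  split_ifs with h1 h2 h3
  · rw [Nat.mod_eq_of_lt (by omega), add_comm p.val (posOf k π (k - 1)), Nat.cast_succ]
  · rw [show p.val + posOf k π (k - 1) = k by omega, Nat.mod_self, hπ.2 0 (by simp)]
    simp
  · rw [Nat.mod_eq_sub_mod (by omega), Nat.mod_eq_of_lt (by omega),
      show p.val + posOf k π (k - 1) - k = p.val - (k - posOf k π (k - 1)) by omega, Nat.cast_succ]
  · rw [show p.val = 0 by simp at h1; omega, zero_add, Nat.mod_eq_of_lt (by omega), hπt,
      Nat.cast_zero, ← Nat.cast_succ, Nat.succ_eq_add_one, Nat.sub_add_cancel (by omega : 1 ≤ k),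
      ZMod.natCast_self]

lemma OneLine.apply_add_one_lt (hπ : OneLine k π) {r : ℕ} (hr : r ∈ Icc 1 (k - 1))
    (hrt : r ≠ posOf k π (k - 1)) : π r + 1 < k := by
  obtain ⟨ht, hπt⟩ := hπ.posOf_sub_one
  have := mem_Icc.mp (hπ.apply_mem hr)
  have : π r ≠ k - 1 := fun h =>
    hrt (hπ.1.injOn (by simpa using hr) (by simpa using ht) (h.trans hπt.symm))
  omega

lemma oneLine_rot (hπ : OneLine k π) : OneLine k (rot k π) := by
  have hk : 1 < k := Fact.out
  have ht := mem_Icc.mp hπ.posOf_sub_one.1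
  refine OneLine.of_injective_cyc (fun p hp => if_pos (by simpa using hp)) (fun p => ?_) ?_
  · unfold rot
    split_ifs with h1 h2 h3
    · rw [mem_Icc] at h1
      exact hπ.apply_add_one_lt (mem_Icc.mpr ⟨by omega, by omega⟩) (by omega)
    · omega
    · rw [mem_Icc] at h1
      exact hπ.apply_add_one_lt (mem_Icc.mpr ⟨by omega, by omega⟩) (by omega)
    · omega
  · intro p r h
    rw [hπ.cyc_rot, hπ.cyc_rot] at h
    exact add_right_cancel (hπ.cyc_injective (add_right_cancel h))

lemma OneLine.cycPos_rot (hπ : OneLine k π) (v : ZMod k) :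
    cycPos k (rot k π) v = cycPos k π (v - 1) - posOf k π (k - 1) := by
  rw [(oneLine_rot hπ).cycPos_eq_iff, hπ.cyc_rot, sub_add_cancel, hπ.cyc_cycPos, sub_add_cancel]

lemma OneLine.card_adjInvF_rot (hπ : OneLine k π) :
    (adjInvF k (rot k π)).card = (adjInvF k π).card := by
  refine (oneLine_rot hπ).card_adjInvF_eq hπ ?_
  simp only [hπ.cycPos_rot, sub_sub_sub_cancel_right]
  exact Equiv.sum_comp (Equiv.subRight 1) fun v => (cycPos k π v - cycPos k π (v - 1)).val

lemma OneLine.cycWindow_rot (hπ : OneLine k π) (s : ZMod k) (ℓ : ℕ) :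
    cycWindow k (rot k π) s ℓ = (cycWindow k π (s + posOf k π (k - 1)) ℓ).image (· + 1) := by
  simp only [cycWindow, image_image, Function.comp_def, hπ.cyc_rot, add_right_comm s]

lemma OneLine.edgeDirs_rot (hπ : OneLine k π) (β : ZMod k → ℤ) :
    β ∈ edgeDirs k (rot k π) ↔ β ∘ Equiv.addRight 1 ∈ edgeDirs k π := by
  constructor
  · rintro ⟨s, ℓ, hℓ0, hℓ, rfl⟩
    refine ⟨s + posOf k π (k - 1), ℓ, hℓ0, hℓ, funext fun g => ?_⟩
    rw [Function.comp_apply, Equiv.coe_addRight, hπ.cycWindow_rot, bdry_image_add_one,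
      add_sub_cancel_right]
  · rintro ⟨s, ℓ, hℓ0, hℓ, h⟩
    refine ⟨s - posOf k π (k - 1), ℓ, hℓ0, hℓ, funext fun g => ?_⟩
    rw [hπ.cycWindow_rot, sub_add_cancel, bdry_image_add_one, ← h]
    simp

theorem OneLine.exists_bijOn_rot (hπ : OneLine k π) :
    ∃ f : (ℕ → ℕ) → (ℕ → ℕ), Set.BijOn f (W k q π) (W k q (rot k π)) ∧
      (∀ x ∈ W k q π, ∀ y ∈ W k q π, (AdjRel k π x y ↔ AdjRel k (rot k π) (f x) (f y))) ∧
      (∀ x ∈ W k q π, labels k q (rot k π) (f x) = (labels k q π x).image (rotV k)) := by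
  exact exists_bijOn_of_edgeDirs hπ (oneLine_rot hπ) hπ.card_adjInvF_rot mapsTo_rotV
    mapsTo_rotV_inv invOn_rotV (Equiv.addRight 1) (fun i hi => natCast_rotV hi) hπ.edgeDirs_rot

end Rotation

section Reflection

variable {k q : ℕ} {π : ℕ → ℕ}

lemma mapsTo_sreflV : Set.MapsTo (sreflV k) (Icc 1 k) (Icc 1 k) := fun i hi => by
  simp only [coe_Icc, Set.mem_Icc, sreflV] at hi ⊢
  split_ifs <;> omega

lemma invOn_sreflV : Set.InvOn (sreflV k) (sreflV k) (Icc 1 k) (Icc 1 k) := by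
  constructor <;> intro i hi <;> simp only [coe_Icc, Set.mem_Icc, sreflV] at hi ⊢ <;>
    split_ifs <;> omega

lemma natCast_sreflV {i : ℕ} (hi : i ∈ Icc 1 k) : ((sreflV k i : ℕ) : ZMod k) = 2 - i := by
  rw [sreflV]
  split_ifs with h
  · subst h; norm_num
  · rw [Nat.cast_sub (by simp at hi; omega)]
    push_cast
    rw [ZMod.natCast_self, zero_add]

variable [Fact (1 < k)]

lemma OneLine.posOf_one (hπ : OneLine k π) :
    posOf k π 1 ∈ Icc 1 (k - 1) ∧ π (posOf k π 1) = 1 :=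
  hπ.posOf_mem (mem_Icc.mpr ⟨le_rfl, by have : 1 < k := Fact.out; omega⟩)

lemma OneLine.cyc_srefl (hπ : OneLine k π) (p : ZMod k) :
    cyc k (srefl k π) p = 1 - cyc k π (posOf k π 1 - p) := by
  have hk : 1 < k := Fact.out
  obtain ⟨hi, hπi⟩ := hπ.posOf_one
  have hi' := mem_Icc.mp hi
  have hn := ZMod.val_lt p
  have hsub := ZMod.val_sub_eq_ite (posOf k π 1 : ZMod k) p
  rw [ZMod.val_cast_of_lt (by omega)] at hsub
  have hle : ∀ r, π r ≤ k + 1 := fun r => by have := hπ.apply_lt (by omega) r; omega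
  simp only [cyc]
  unfold srefl
  split_ifs with h1 h2 h3
  · rw [show ((posOf k π 1 : ZMod k) - p).val = posOf k π 1 - p.val by
      rw [if_neg (by omega)] at hsub; omega, Nat.cast_sub (hle _)]
    push_cast
    rw [ZMod.natCast_self, zero_add]
  · rw [show ((posOf k π 1 : ZMod k) - p).val = 0 by rw [if_neg (by omega)] at hsub; omega,
      hπ.2 0 (by simp)]
    simp
  · rw [show ((posOf k π 1 : ZMod k) - p).val = k + posOf k π 1 - p.val by
      rw [if_pos (by omega)] at hsub; omega, Nat.cast_sub (hle _)]
    push_cast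
    rw [ZMod.natCast_self, zero_add]
  · rw [show ((posOf k π 1 : ZMod k) - p).val = posOf k π 1 by
      rw [if_neg (by simp at h1; omega)] at hsub; simp at h1; omega, hπi]
    simp

lemma OneLine.two_le_apply (hπ : OneLine k π) {r : ℕ} (hr : r ∈ Icc 1 (k - 1))
    (hri : r ≠ posOf k π 1) : 2 ≤ π r := by
  obtain ⟨hi, hπi⟩ := hπ.posOf_one
  have := mem_Icc.mp (hπ.apply_mem hr)
  have : π r ≠ 1 := fun h =>
    hri (hπ.1.injOn (by simpa using hr) (by simpa using hi) (h.trans hπi.symm))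
  omega

lemma oneLine_srefl (hπ : OneLine k π) : OneLine k (srefl k π) := by
  have hk : 1 < k := Fact.out
  have hi := mem_Icc.mp hπ.posOf_one.1
  refine OneLine.of_injective_cyc (fun p hp => if_pos (by simpa using hp)) (fun p => ?_) ?_
  · unfold srefl
    split_ifs with h1 h2 h3
    · rw [mem_Icc] at h1
      have := hπ.two_le_apply (r := posOf k π 1 - p) (mem_Icc.mpr ⟨by omega, by omega⟩) (by omega)
      omega
    · omega
    · rw [mem_Icc] at h1
      have := hπ.two_le_apply (r := k + posOf k π 1 - p) (mem_Icc.mpr ⟨by omega, by omega⟩)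
        (by omega)
      omega
    · omega
  · intro p r h
    rw [hπ.cyc_srefl, hπ.cyc_srefl] at h
    exact sub_right_injective (hπ.cyc_injective (sub_right_injective h))

lemma OneLine.cycPos_srefl (hπ : OneLine k π) (v : ZMod k) :
    cycPos k (srefl k π) v = posOf k π 1 - cycPos k π (1 - v) := by
  rw [(oneLine_srefl hπ).cycPos_eq_iff, hπ.cyc_srefl, sub_sub_cancel, hπ.cyc_cycPos, sub_sub_cancel]

lemma OneLine.card_adjInvF_srefl (hπ : OneLine k π) :
    (adjInvF k (srefl k π)).card = (adjInvF k π).card := by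
  refine (oneLine_srefl hπ).card_adjInvF_eq hπ ?_
  simp only [hπ.cycPos_srefl, sub_sub_sub_cancel_left]
  exact Fintype.sum_equiv (Equiv.subLeft 2) _ _ fun v => by
    rw [Equiv.subLeft_apply, show (1 : ZMod k) - (v - 1) = 2 - v by ring,
      show (2 : ZMod k) - v - 1 = 1 - v by ring]

lemma OneLine.cycWindow_srefl (hπ : OneLine k π) (s : ZMod k) (ℓ : ℕ) :
    cycWindow k (srefl k π) s ℓ =
      (cycWindow k π (posOf k π 1 - s - (ℓ - 1 : ℕ)) ℓ).image (1 - ·) := by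
  have key : ∀ j < ℓ, (posOf k π 1 : ZMod k) - (s + j) =
      posOf k π 1 - s - ((ℓ - 1 : ℕ) : ZMod k) + ((ℓ - 1 - j : ℕ) : ZMod k) := fun j hj => by
    rw [Nat.cast_sub (by omega : j ≤ ℓ - 1)]; ring
  ext v
  simp only [cycWindow, image_image, mem_image, mem_range, Function.comp_apply, hπ.cyc_srefl]
  constructor
  · rintro ⟨j, hj, rfl⟩
    exact ⟨ℓ - 1 - j, by omega, by rw [key j hj]⟩
  · rintro ⟨j, hj, rfl⟩
    refine ⟨ℓ - 1 - j, by omega, ?_⟩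
    rw [key _ (by omega), Nat.sub_sub_self (by omega : j ≤ ℓ - 1)]

lemma OneLine.edgeDirs_srefl (hπ : OneLine k π) (β : ZMod k → ℤ) :
    β ∈ edgeDirs k (srefl k π) ↔ β ∘ Equiv.subLeft 2 ∈ edgeDirs k π := by
  constructor
  · rintro ⟨s, ℓ, hℓ0, hℓ, rfl⟩
    convert hπ.neg_mem_edgeDirs ⟨posOf k π 1 - s - (ℓ - 1 : ℕ), ℓ, hℓ0, hℓ, rfl⟩ using 1
    funext g
    rw [Function.comp_apply, Equiv.subLeft_apply, hπ.cycWindow_srefl, bdry_image_one_sub,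
      sub_sub_cancel, Pi.neg_apply]
  · intro h
    obtain ⟨s, ℓ, hℓ0, hℓ, h⟩ := hπ.neg_mem_edgeDirs h
    refine ⟨posOf k π 1 - s - (ℓ - 1 : ℕ), ℓ, hℓ0, hℓ, funext fun g => ?_⟩
    rw [hπ.cycWindow_srefl, show (posOf k π 1 : ZMod k) - (posOf k π 1 - s - (ℓ - 1 : ℕ)) -
      (ℓ - 1 : ℕ) = s by ring, bdry_image_one_sub, ← h]
    simp

theorem OneLine.exists_bijOn_srefl (hπ : OneLine k π) :
    ∃ f : (ℕ → ℕ) → (ℕ → ℕ), Set.BijOn f (W k q π) (W k q (srefl k π)) ∧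
      (∀ x ∈ W k q π, ∀ y ∈ W k q π, (AdjRel k π x y ↔ AdjRel k (srefl k π) (f x) (f y))) ∧
      (∀ x ∈ W k q π, labels k q (srefl k π) (f x) = (labels k q π x).image (sreflV k)) := by
  exact exists_bijOn_of_edgeDirs hπ (oneLine_srefl hπ) hπ.card_adjInvF_srefl mapsTo_sreflV
    mapsTo_sreflV invOn_sreflV (Equiv.subLeft 2) (fun i hi => natCast_sreflV hi) hπ.edgeDirs_srefl

end Reflection

theorem stmt13_general (k q : ℕ) (hk : 2 ≤ k) (π : ℕ → ℕ) (hπ : OneLine k π) :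
    (∃ f : (ℕ → ℕ) → (ℕ → ℕ),
      Set.BijOn f (W k q π) (W k q (rot k π)) ∧
      (∀ x ∈ W k q π, ∀ y ∈ W k q π,
        (AdjRel k π x y ↔ AdjRel k (rot k π) (f x) (f y))) ∧
      (∀ x ∈ W k q π,
        labels k q (rot k π) (f x) = (labels k q π x).image (rotV k))) ∧
    (∃ f : (ℕ → ℕ) → (ℕ → ℕ),
      Set.BijOn f (W k q π) (W k q (srefl k π)) ∧
      (∀ x ∈ W k q π, ∀ y ∈ W k q π,
        (AdjRel k π x y ↔ AdjRel k (srefl k π) (f x) (f y))) ∧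
      (∀ x ∈ W k q π,
        labels k q (srefl k π) (f x) = (labels k q π x).image (sreflV k))) := by
  have : Fact (1 < k) := ⟨hk⟩
  exact ⟨hπ.exists_bijOn_rot, hπ.exists_bijOn_srefl⟩

theorem stmt13 (k q : ℕ) (hk : 2 ≤ k) (hq : 1 ≤ q) (π : ℕ → ℕ) (hπ : OneLine k π) :
    (∃ f : (ℕ → ℕ) → (ℕ → ℕ),
      Set.BijOn f (W k q π) (W k q (rot k π)) ∧
      (∀ x ∈ W k q π, ∀ y ∈ W k q π,
        (AdjRel k π x y ↔ AdjRel k (rot k π) (f x) (f y))) ∧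
      (∀ x ∈ W k q π,
        labels k q (rot k π) (f x) = (labels k q π x).image (rotV k))) ∧
    (∃ f : (ℕ → ℕ) → (ℕ → ℕ),
      Set.BijOn f (W k q π) (W k q (srefl k π)) ∧
      (∀ x ∈ W k q π, ∀ y ∈ W k q π,
        (AdjRel k π x y ↔ AdjRel k (srefl k π) (f x) (f y))) ∧
      (∀ x ∈ W k q π,
        labels k q (srefl k π) (f x) = (labels k q π x).image (sreflV k))) :=
  stmt13_general k q hk π hπ

end
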